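/- arXiv:1509.01844 — 8 statements merged into one kernel-verified Lean document; each statement's English description precedes it below -/
import Mathlib

section
/- Let G = (V, E, w) be a strongly asymmetric weighted digraph (i.e., for every (u,v) ∈ E one has (v,u) ∉ E) with strictly positive weights, and let ε ∈ (0,1). Then every ε-And-sparsifier G_ε = (V, E_ε, w_ε) of G satisfies E_ε = E. -/
/-- A two-variable boolean predicate. -/
abbrev Pred := Bool → Bool → Bool

/-- The predicate `And`: satisfied iff both inputs are 1. -/
def pAnd : Pred := fun x y => x && y

/-- The value `P_G(S)` of a predicate `P` on the weighted digraph `G = (V, E, w)`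
for a subset `S ⊆ V`. -/
def predVal {V : Type} [DecidableEq V] (P : Pred) (E : Finset (V × V))
    (w : V × V → ℝ) (S : Finset V) : ℝ :=
  ∑ e ∈ E, if P (decide (e.1 ∈ S)) (decide (e.2 ∈ S)) then w e else 0

/-- `(Eε, wε)` is an `ε`-`P`-sparsifier of `(E, w)`: a reweighted subgraph with strictly
positive weights whose `P`-value is within factor `(1 ± ε)` of that of `G` on every `S`. -/
def IsSparsifier {V : Type} [DecidableEq V] (P : Pred) (E : Finset (V × V))
    (w : V × V → ℝ) (Eε : Finset (V × V)) (wε : V × V → ℝ) (ε : ℝ) : Prop :=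
  Eε ⊆ E ∧ (∀ e ∈ Eε, 0 < wε e) ∧
    ∀ S : Finset V,
      (1 - ε) * predVal P E w S ≤ predVal P Eε wε S ∧
        predVal P Eε wε S ≤ (1 + ε) * predVal P E w S

/-- If `G = (V, E, w)` is strongly asymmetric with strictly positive
weights and `ε ∈ (0,1)`, then every `ε`-`And`-sparsifier of `G` keeps all edges. -/
theorem stmt0 {V : Type} [DecidableEq V] (E : Finset (V × V)) (w : V × V → ℝ)
    (hw : ∀ e ∈ E, 0 < w e)
    (hasym : ∀ e ∈ E, (e.2, e.1) ∉ E)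
    (ε : ℝ) (hε : ε ∈ Set.Ioo (0 : ℝ) 1)
    (Eε : Finset (V × V)) (wε : V × V → ℝ)
    (h : IsSparsifier pAnd E w Eε wε ε) : Eε = E := by
  obtain ⟨hsub, hpos, hS⟩ := h
  refine Finset.Subset.antisymm hsub fun e he => ?_
  by_contra hne
  set S : Finset V := {e.1, e.2} with hSdef
  -- the only edge of E with both endpoints in S is e itself
  have key : ∀ f ∈ E, f.1 ∈ S → f.2 ∈ S → f = e := by
    intro f hf h1 h2
    simp only [hSdef, Finset.mem_insert, Finset.mem_singleton] at h1 h2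
    have hloop : f.1 ≠ f.2 := by
      intro hl
      exact hasym f hf ((Prod.ext hl.symm hl : (f.2, f.1) = f) ▸ hf)
    rcases h1 with h1 | h1 <;> rcases h2 with h2 | h2
    · exact absurd (h1.trans h2.symm) hloop
    · exact Prod.ext h1 h2
    · exact absurd (show (e.2, e.1) ∈ E from by rw [← h1, ← h2]; exact hf)
        (hasym e he)
    · exact absurd (h1.trans h2.symm) hloop
  have hGE : predVal pAnd E w S = w e := by
    unfold predVal
    rw [Finset.sum_eq_single e]
    · simp [pAnd, hSdef]
    · intro f hf hfe
      simp only [pAnd, Bool.and_eq_true, decide_eq_true_eq, ite_eq_right_iff]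
      intro ⟨h1, h2⟩
      exact absurd (key f hf h1 h2) hfe
    · intro h'; exact absurd he h'
  have hEps : predVal pAnd Eε wε S = 0 := by
    unfold predVal
    refine Finset.sum_eq_zero fun f hf => ?_
    simp only [pAnd, Bool.and_eq_true, decide_eq_true_eq, ite_eq_right_iff]
    intro ⟨h1, h2⟩
    exact absurd (key f (hsub hf) h1 h2 ▸ hf) hne
  have := (hS S).1
  rw [hGE, hEps] at this
  obtain ⟨hε0, hε1⟩ := hε
  nlinarith [hw e he]
end

section
/- For every weighted digraph H = (V, E, w) and every S ⊆ V, the following identities hold: Cut_H(S) = Cut_{γ(H)}(S⁺ ∪ S⁻); unCut_H(S) = Cut_{γ(H)}(S⁺ ∪ S̄⁻); 1x_H(S) = Cut_{γ(H)}(S⁺); 0x_H(S) = Cut_{γ(H)}(S̄⁺); x1_H(S) = Cut_{γ(H)}(S⁻); x0_H(S) = Cut_{γ(H)}(S̄⁻); 1⃗_H(S) = Cut_{γ(H)}(V⁺); and 0⃗_H(S) = Cut_{γ(H)}(∅). -/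
/-- Edge set of the bipartite double cover `γ(G)`: each edge `(u,v)` becomes
`(u⁺, v⁻)`, where `V⁺` is the left copy (`Sum.inl`) and `V⁻` the right copy (`Sum.inr`). -/
def gammaE {V : Type} [DecidableEq V] (E : Finset (V × V)) :
    Finset ((V ⊕ V) × (V ⊕ V)) :=
  E.image fun e => (Sum.inl e.1, Sum.inr e.2)

/-- Weights of the bipartite double cover: `(u⁺, v⁻)` inherits the weight of `(u,v)`. -/
def gammaW {V : Type} (w : V × V → ℝ) : (V ⊕ V) × (V ⊕ V) → ℝ
  | (Sum.inl u, Sum.inr v) => w (u, v)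
  | _ => 0

/-- `S⁺`, the copy of `S` in the left side of the double cover. -/
def plusS {V : Type} [DecidableEq V] (S : Finset V) : Finset (V ⊕ V) := S.image Sum.inl

/-- `S⁻`, the copy of `S` in the right side of the double cover. -/
def minusS {V : Type} [DecidableEq V] (S : Finset V) : Finset (V ⊕ V) := S.image Sum.inr

/-- `Cut(x,y) = 1` iff `x ≠ y`. -/
def pCut : Pred := fun x y => x != y
/-- `unCut(x,y) = 1` iff `x = y`. -/
def pUnCut : Pred := fun x y => x == y
/-- `1x(x,y) = x`. -/
def p1x : Pred := fun x _ => x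
/-- `0x(x,y) = 1 − x`. -/
def p0x : Pred := fun x _ => !x
/-- `x1(x,y) = y`. -/
def px1 : Pred := fun _ y => y
/-- `x0(x,y) = 1 − y`. -/
def px0 : Pred := fun _ y => !y
/-- `1⃗(x,y) = 1`. -/
def pOne : Pred := fun _ _ => true
/-- `0⃗(x,y) = 0`. -/
def pZero : Pred := fun _ _ => false

lemma gamma_val {V : Type} [DecidableEq V] (P : Pred) (E : Finset (V × V))
    (w : V × V → ℝ) (T : Finset (V ⊕ V)) :
    predVal P (gammaE E) (gammaW w) T =
      ∑ e ∈ E, if P (decide (Sum.inl e.1 ∈ T)) (decide (Sum.inr e.2 ∈ T)) then w e else 0 := by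
  unfold predVal gammaE
  rw [Finset.sum_image]
  · simp [gammaW]
  · intro a _ b _ h
    simp only [Prod.mk.injEq, Sum.inl.injEq, Sum.inr.injEq] at h
    exact Prod.ext h.1 h.2

lemma mem_plusS {V : Type} [DecidableEq V] (S : Finset V) (u : V) :
    (Sum.inl u : V ⊕ V) ∈ plusS S ↔ u ∈ S := by simp [plusS]

lemma mem_minusS {V : Type} [DecidableEq V] (S : Finset V) (u : V) :
    (Sum.inr u : V ⊕ V) ∈ minusS S ↔ u ∈ S := by simp [minusS]

/-- For every weighted digraph `H = (V, E, w)` and `S ⊆ V`: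
`Cut_H(S) = Cut_{γ(H)}(S⁺ ∪ S⁻)`, `unCut_H(S) = Cut_{γ(H)}(S⁺ ∪ S̄⁻)`,
`1x_H(S) = Cut_{γ(H)}(S⁺)`, `0x_H(S) = Cut_{γ(H)}(S̄⁺)`, `x1_H(S) = Cut_{γ(H)}(S⁻)`,
`x0_H(S) = Cut_{γ(H)}(S̄⁻)`, `1⃗_H(S) = Cut_{γ(H)}(V⁺)`, and `0⃗_H(S) = Cut_{γ(H)}(∅)`. -/
theorem stmt2 {V : Type} [Fintype V] [DecidableEq V]
    (E : Finset (V × V)) (w : V × V → ℝ) (hw : ∀ e ∈ E, 0 < w e) (S : Finset V) :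
    predVal pCut E w S = predVal pCut (gammaE E) (gammaW w) (plusS S ∪ minusS S) ∧
    predVal pUnCut E w S = predVal pCut (gammaE E) (gammaW w) (plusS S ∪ minusS Sᶜ) ∧
    predVal p1x E w S = predVal pCut (gammaE E) (gammaW w) (plusS S) ∧
    predVal p0x E w S = predVal pCut (gammaE E) (gammaW w) (plusS Sᶜ) ∧
    predVal px1 E w S = predVal pCut (gammaE E) (gammaW w) (minusS S) ∧
    predVal px0 E w S = predVal pCut (gammaE E) (gammaW w) (minusS Sᶜ) ∧
    predVal pOne E w S = predVal pCut (gammaE E) (gammaW w) (plusS Finset.univ) ∧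
    predVal pZero E w S = predVal pCut (gammaE E) (gammaW w) (∅ : Finset (V ⊕ V)) := by
  refine ⟨?_, ?_, ?_, ?_, ?_, ?_, ?_, ?_⟩ <;>
    · rw [gamma_val]
      refine Finset.sum_congr rfl fun e _ => ?_
      by_cases h1 : e.1 ∈ S <;> by_cases h2 : e.2 ∈ S <;>
        simp [pCut, pUnCut, p1x, p0x, px1, px0, pOne, pZero,
          plusS, minusS, Finset.mem_union, h1, h2]
end

section
/- For every weighted digraph H = (V, E, w) and every S ⊆ V, the following identities hold: 2·Or_H(S) = Cut_{γ(H)}(S⁺) + Cut_{γ(H)}(S⁻) + Cut_{γ(H)}(S⁺ ∪ S⁻); 2·nAnd_H(S) = Cut_{γ(H)}(S̄⁺) + Cut_{γ(H)}(S̄⁻) + Cut_{γ(H)}(S̄⁺ ∪ S̄⁻); 2·10̄_H(S) = Cut_{γ(H)}(S̄⁺) + Cut_{γ(H)}(S⁻) + Cut_{γ(H)}(S̄⁺ ∪ S⁻); and 2·01̄_H(S) = Cut_{γ(H)}(S⁺) + Cut_{γ(H)}(S̄⁻) + Cut_{γ(H)}(S⁺ ∪ S̄⁻). -/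
/-- `Or(x,y) = 1` iff `x = 1` or `y = 1`. -/
def pOr : Pred := fun x y => x || y
/-- `nAnd(x,y) = 1` iff not (`x = y = 1`). -/
def pNAnd : Pred := fun x y => !(x && y)
/-- `10̄(x,y) = 0` iff `(x,y) = (1,0)`, otherwise `1`. -/
def pBar10 : Pred := fun x y => !(x && !y)
/-- `01̄(x,y) = 0` iff `(x,y) = (0,1)`, otherwise `1`. -/
def pBar01 : Pred := fun x y => !(!x && y)

/-- For every weighted digraph `H = (V, E, w)` and `S ⊆ V`:
`2·Or_H(S) = Cut_{γ(H)}(S⁺) + Cut_{γ(H)}(S⁻) + Cut_{γ(H)}(S⁺ ∪ S⁻)`,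
`2·nAnd_H(S) = Cut_{γ(H)}(S̄⁺) + Cut_{γ(H)}(S̄⁻) + Cut_{γ(H)}(S̄⁺ ∪ S̄⁻)`,
`2·10̄_H(S) = Cut_{γ(H)}(S̄⁺) + Cut_{γ(H)}(S⁻) + Cut_{γ(H)}(S̄⁺ ∪ S⁻)`, and
`2·01̄_H(S) = Cut_{γ(H)}(S⁺) + Cut_{γ(H)}(S̄⁻) + Cut_{γ(H)}(S⁺ ∪ S̄⁻)`. -/
theorem stmt3 {V : Type} [Fintype V] [DecidableEq V]
    (E : Finset (V × V)) (w : V × V → ℝ) (hw : ∀ e ∈ E, 0 < w e) (S : Finset V) :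
    2 * predVal pOr E w S =
      predVal pCut (gammaE E) (gammaW w) (plusS S) +
      predVal pCut (gammaE E) (gammaW w) (minusS S) +
      predVal pCut (gammaE E) (gammaW w) (plusS S ∪ minusS S) ∧
    2 * predVal pNAnd E w S =
      predVal pCut (gammaE E) (gammaW w) (plusS Sᶜ) +
      predVal pCut (gammaE E) (gammaW w) (minusS Sᶜ) +
      predVal pCut (gammaE E) (gammaW w) (plusS Sᶜ ∪ minusS Sᶜ) ∧
    2 * predVal pBar10 E w S =
      predVal pCut (gammaE E) (gammaW w) (plusS Sᶜ) +
      predVal pCut (gammaE E) (gammaW w) (minusS S) +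
      predVal pCut (gammaE E) (gammaW w) (plusS Sᶜ ∪ minusS S) ∧
    2 * predVal pBar01 E w S =
      predVal pCut (gammaE E) (gammaW w) (plusS S) +
      predVal pCut (gammaE E) (gammaW w) (minusS Sᶜ) +
      predVal pCut (gammaE E) (gammaW w) (plusS S ∪ minusS Sᶜ) := by
  have key : ∀ (P : Pred) (T : Finset (V ⊕ V)),
      predVal P (gammaE E) (gammaW w) T =
        ∑ e ∈ E, if P (decide (Sum.inl e.1 ∈ T)) (decide (Sum.inr e.2 ∈ T))
          then w e else 0 := by
    intro P T
    unfold predVal gammaE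
    rw [Finset.sum_image (by intro a _ b _ h; simpa [Prod.ext_iff] using h)]
    rfl
  have hmem : ∀ (u : V) (A B : Finset V),
      (Sum.inl u ∈ plusS A ∪ minusS B ↔ u ∈ A) ∧
      (Sum.inr u ∈ plusS A ∪ minusS B ↔ u ∈ B) ∧
      (Sum.inl u ∈ plusS A ↔ u ∈ A) ∧ (Sum.inr u ∈ plusS A ↔ False) ∧
      (Sum.inl u ∈ minusS B ↔ False) ∧ (Sum.inr u ∈ minusS B ↔ u ∈ B) := by
    intro u A B
    simp [plusS, minusS]
  refine ⟨?_, ?_, ?_, ?_⟩ <;>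
  · rw [key, key, key]
    simp only [predVal, ← Finset.sum_add_distrib, Finset.mul_sum]
    refine Finset.sum_congr rfl fun e _ => ?_
    obtain ⟨h1, h2, h3, h4, h5, h6⟩ := hmem e.1 S Sᶜ
    obtain ⟨g1, g2, g3, g4, g5, g6⟩ := hmem e.1 Sᶜ S
    obtain ⟨k1, k2, k3, k4, k5, k6⟩ := hmem e.2 S Sᶜ
    obtain ⟨l1, l2, l3, l4, l5, l6⟩ := hmem e.2 Sᶜ S
    by_cases hu : e.1 ∈ S <;> by_cases hv : e.2 ∈ S <;>
      simp_all [pCut, pOr, pNAnd, pBar10, pBar01] <;> ring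
end

section
/- Let G = (V, E, w) be a weighted digraph, let ε ∈ (0,1), and let G'_ε = (V⁺ ∪ V⁻, E'_ε, w'_ε) be an ε-Cut-sparsifier of the bipartite double cover γ(G). Define the weighted digraph G_ε = (V, E_ε, w_ε) by E_ε = {(u,v) ∈ E : (u⁺, v⁻) ∈ E'_ε} and w_ε(u,v) = w'_ε(u⁺, v⁻). Then for every predicate P ∈ {Cut, unCut, Or, nAnd, 10̄, 01̄, 1x, 0x, x1, x0, 1⃗, 0⃗}, G_ε is an ε-P-sparsifier of G. -/
section Aux4
variable {V : Type} [Fintype V] [DecidableEq V]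

/-- Cut value with independent sets on the two sides. -/
def cutAB (E : Finset (V × V)) (w : V × V → ℝ) (A B : Finset V) : ℝ :=
  ∑ e ∈ E, if decide (e.1 ∈ A) != decide (e.2 ∈ B) then w e else 0

/-- Realize a boolean function as a set operation. -/
def setOfF (f : Bool → Bool) (S : Finset V) : Finset V :=
  if f true then (if f false then Finset.univ else S) else (if f false then Sᶜ else ∅)

lemma mem_setOfF (f : Bool → Bool) (S : Finset V) (v : V) :
    decide (v ∈ setOfF f S) = f (decide (v ∈ S)) := by
  unfold setOfF
  by_cases h : v ∈ S <;> cases hft : f true <;> cases hff : f false <;>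
    simp [h, hft, hff]

@[simp] lemma mem_inl_plus (A : Finset V) (u : V) : (Sum.inl u ∈ plusS A) ↔ u ∈ A := by
  simp [plusS]

@[simp] lemma mem_inl_minus (B : Finset V) (u : V) : (Sum.inl u ∈ minusS B) ↔ False := by
  simp [minusS]

@[simp] lemma mem_inr_plus (A : Finset V) (v : V) : (Sum.inr v ∈ plusS A) ↔ False := by
  simp [plusS]

@[simp] lemma mem_inr_minus (B : Finset V) (v : V) : (Sum.inr v ∈ minusS B) ↔ v ∈ B := by
  simp [minusS]

lemma gamma_inj : Function.Injective
    (fun e : V × V => ((Sum.inl e.1, Sum.inr e.2) : (V ⊕ V) × (V ⊕ V))) := by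
  intro a b h
  simp only [Prod.ext_iff, Sum.inl.injEq, Sum.inr.injEq] at h
  exact Prod.ext h.1 h.2

lemma gamma_cut (E : Finset (V × V)) (w : V × V → ℝ) (A B : Finset V) :
    predVal pCut (gammaE E) (gammaW w) (plusS A ∪ minusS B) = cutAB E w A B := by
  unfold predVal gammaE cutAB
  rw [Finset.sum_image (fun a _ b _ h => gamma_inj h)]
  refine Finset.sum_congr rfl fun e _ => ?_
  by_cases h1 : e.1 ∈ A <;> by_cases h2 : e.2 ∈ B <;> simp [pCut, gammaW, h1, h2]

lemma eq_image_filter (E : Finset (V × V)) (Eγ : Finset ((V ⊕ V) × (V ⊕ V)))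
    (hsub : Eγ ⊆ gammaE E) :
    Eγ = (E.filter fun e => (Sum.inl e.1, Sum.inr e.2) ∈ Eγ).image
      (fun e => (Sum.inl e.1, Sum.inr e.2)) := by
  ext g
  simp only [Finset.mem_image, Finset.mem_filter]
  constructor
  · intro hg
    obtain ⟨e, he, rfl⟩ := Finset.mem_image.1 (hsub hg)
    exact ⟨e, ⟨he, hg⟩, rfl⟩
  · rintro ⟨e, ⟨_, hg⟩, rfl⟩; exact hg

lemma sparse_cut (E : Finset (V × V)) (Eγ : Finset ((V ⊕ V) × (V ⊕ V)))
    (wγ : (V ⊕ V) × (V ⊕ V) → ℝ) (hsub : Eγ ⊆ gammaE E) (A B : Finset V) :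
    predVal pCut Eγ wγ (plusS A ∪ minusS B)
      = cutAB (E.filter fun e => (Sum.inl e.1, Sum.inr e.2) ∈ Eγ)
          (fun e => wγ (Sum.inl e.1, Sum.inr e.2)) A B := by
  have hF := eq_image_filter E Eγ hsub
  set F := E.filter fun e => (Sum.inl e.1, Sum.inr e.2) ∈ Eγ with hFdef
  unfold predVal cutAB
  rw [hF, Finset.sum_image (fun a _ b _ h => gamma_inj h)]
  refine Finset.sum_congr rfl fun e _ => ?_
  by_cases h1 : e.1 ∈ A <;> by_cases h2 : e.2 ∈ B <;> simp [pCut, h1, h2]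

lemma list_finset_swap {α β : Type*} (L : List α) (g : α → β → ℝ) (E' : Finset β) :
    (L.map fun a => ∑ e ∈ E', g a e).sum = ∑ e ∈ E', (L.map fun a => g a e).sum := by
  induction L with
  | nil => simp
  | cons a t ih => simp [ih, Finset.sum_add_distrib]

lemma sum_map_mul {α : Type*} (L : List α) (f : α → ℝ) (c : ℝ) :
    (L.map f).sum * c = (L.map fun a => f a * c).sum := by
  induction L with
  | nil => simp
  | cons a t ih => simp [add_mul, ih]

lemma list_sandwich {α : Type*} (L : List α) (c : ℝ) (X Y : α → ℝ)
    (h : ∀ a ∈ L, c * X a ≤ Y a) :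
    c * (L.map X).sum ≤ (L.map Y).sum := by
  induction L with
  | nil => simp
  | cons a t ih =>
    simp only [List.map_cons, List.sum_cons, mul_add]
    exact add_le_add (h a (by simp)) (ih fun b hb => h b (by simp [hb]))

lemma list_sandwich' {α : Type*} (L : List α) (c : ℝ) (X Y : α → ℝ)
    (h : ∀ a ∈ L, Y a ≤ c * X a) :
    (L.map Y).sum ≤ c * (L.map X).sum := by
  induction L with
  | nil => simp
  | cons a t ih =>
    simp only [List.map_cons, List.sum_cons, mul_add]
    exact add_le_add (h a (by simp)) (ih fun b hb => h b (by simp [hb]))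

lemma master (E : Finset (V × V)) (w : V × V → ℝ) (ε : ℝ)
    (Eγ : Finset ((V ⊕ V) × (V ⊕ V))) (wγ : (V ⊕ V) × (V ⊕ V) → ℝ)
    (hγ : IsSparsifier pCut (gammaE E) (gammaW w) Eγ wγ ε)
    (P : Pred) (L : List ((Bool → Bool) × (Bool → Bool)))
    (hP : ∀ x y : Bool, 2 * (if P x y then (1:ℝ) else 0)
        = (L.map fun fg => if fg.1 x != fg.2 y then (1:ℝ) else 0).sum) :
    IsSparsifier P E w (E.filter fun e => (Sum.inl e.1, Sum.inr e.2) ∈ Eγ)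
      (fun e => wγ (Sum.inl e.1, Sum.inr e.2)) ε := by
  obtain ⟨hsub, hpos, hS⟩ := hγ
  refine ⟨Finset.filter_subset _ _, fun e he => hpos _ (Finset.mem_filter.1 he).2, fun S => ?_⟩
  have key : ∀ (E' : Finset (V × V)) (w' : V × V → ℝ),
      2 * predVal P E' w' S
        = (L.map fun fg => cutAB E' w' (setOfF fg.1 S) (setOfF fg.2 S)).sum := by
    intro E' w'
    unfold predVal cutAB
    simp only [mem_setOfF]
    rw [list_finset_swap, Finset.mul_sum]
    refine Finset.sum_congr rfl fun e _ => ?_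
    have := hP (decide (e.1 ∈ S)) (decide (e.2 ∈ S))
    have h2 := congrArg (fun r => r * w' e) this
    simp only [mul_assoc] at h2
    rw [sum_map_mul] at h2
    simpa [ite_mul, mul_comm] using h2
  have sand : ∀ fg ∈ L,
      ((1 - ε) * cutAB E w (setOfF fg.1 S) (setOfF fg.2 S)
        ≤ cutAB (E.filter fun e => (Sum.inl e.1, Sum.inr e.2) ∈ Eγ)
            (fun e => wγ (Sum.inl e.1, Sum.inr e.2)) (setOfF fg.1 S) (setOfF fg.2 S)) ∧
      (cutAB (E.filter fun e => (Sum.inl e.1, Sum.inr e.2) ∈ Eγ)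
            (fun e => wγ (Sum.inl e.1, Sum.inr e.2)) (setOfF fg.1 S) (setOfF fg.2 S)
        ≤ (1 + ε) * cutAB E w (setOfF fg.1 S) (setOfF fg.2 S)) := by
    intro fg _
    have := hS (plusS (setOfF fg.1 S) ∪ minusS (setOfF fg.2 S))
    rwa [gamma_cut, sparse_cut E Eγ wγ hsub] at this
  have lo := list_sandwich L (1 - ε) _ _ (fun a ha => (sand a ha).1)
  have hi := list_sandwich' L (1 + ε) _ _ (fun a ha => (sand a ha).2)
  have e1 := key E w
  have e2 := key (E.filter fun e => (Sum.inl e.1, Sum.inr e.2) ∈ Eγ)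
    (fun e => wγ (Sum.inl e.1, Sum.inr e.2))
  rw [← e1, ← e2] at lo hi
  constructor <;> nlinarith [lo, hi]

end Aux4

/-- If `G'_ε = (Eγ, wγ)` is an `ε`-`Cut`-sparsifier of the bipartite
double cover `γ(G)` of `G = (V, E, w)`, then the digraph `G_ε` with edge set
`{(u,v) ∈ E : (u⁺,v⁻) ∈ Eγ}` and weights `wε(u,v) = wγ(u⁺,v⁻)` is an
`ε`-`P`-sparsifier of `G` for each predicate
`P ∈ {Cut, unCut, Or, nAnd, 10̄, 01̄, 1x, 0x, x1, x0, 1⃗, 0⃗}`. -/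
theorem stmt4 {V : Type} [Fintype V] [DecidableEq V]
    (E : Finset (V × V)) (w : V × V → ℝ) (hw : ∀ e ∈ E, 0 < w e)
    (ε : ℝ) (hε : ε ∈ Set.Ioo (0 : ℝ) 1)
    (Eγ : Finset ((V ⊕ V) × (V ⊕ V))) (wγ : (V ⊕ V) × (V ⊕ V) → ℝ)
    (hγ : IsSparsifier pCut (gammaE E) (gammaW w) Eγ wγ ε) :
    ∀ P ∈ [pCut, pUnCut, pOr, pNAnd, pBar10, pBar01, p1x, p0x, px1, px0, pOne, pZero],
      IsSparsifier P E w
        (E.filter fun e => (Sum.inl e.1, Sum.inr e.2) ∈ Eγ)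
        (fun e => wγ (Sum.inl e.1, Sum.inr e.2)) ε := by
  intro P hP
  simp only [List.mem_cons, List.not_mem_nil, or_false] at hP
  rcases hP with rfl|rfl|rfl|rfl|rfl|rfl|rfl|rfl|rfl|rfl|rfl|rfl
  · exact master E w ε Eγ wγ hγ _ [(id,id),(id,id)]
      (by intro x y; cases x <;> cases y <;> norm_num [pCut])
  · exact master E w ε Eγ wγ hγ _ [(id,Bool.not),(id,Bool.not)]
      (by intro x y; cases x <;> cases y <;> norm_num [pUnCut])
  · exact master E w ε Eγ wγ hγ _ [(id,fun _ => false),(fun _ => false,id),(id,id)]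
      (by intro x y; cases x <;> cases y <;> norm_num [pOr])
  · exact master E w ε Eγ wγ hγ _ [(Bool.not,fun _ => false),(fun _ => false,Bool.not),(id,id)]
      (by intro x y; cases x <;> cases y <;> norm_num [pNAnd])
  · exact master E w ε Eγ wγ hγ _ [(Bool.not,fun _ => false),(fun _ => false,id),(id,Bool.not)]
      (by intro x y; cases x <;> cases y <;> norm_num [pBar10])
  · exact master E w ε Eγ wγ hγ _ [(id,fun _ => false),(fun _ => false,Bool.not),(id,Bool.not)]
      (by intro x y; cases x <;> cases y <;> norm_num [pBar01])
  · exact master E w ε Eγ wγ hγ _ [(id,fun _ => false),(id,fun _ => false)]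
      (by intro x y; cases x <;> cases y <;> norm_num [p1x])
  · exact master E w ε Eγ wγ hγ _ [(Bool.not,fun _ => false),(Bool.not,fun _ => false)]
      (by intro x y; cases x <;> cases y <;> norm_num [p0x])
  · exact master E w ε Eγ wγ hγ _ [(fun _ => false,id),(fun _ => false,id)]
      (by intro x y; cases x <;> cases y <;> norm_num [px1])
  · exact master E w ε Eγ wγ hγ _ [(fun _ => false,Bool.not),(fun _ => false,Bool.not)]
      (by intro x y; cases x <;> cases y <;> norm_num [px0])
  · exact master E w ε Eγ wγ hγ _
      [(id,fun _ => false),(Bool.not,fun _ => false),(id,fun _ => false),(Bool.not,fun _ => false)]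
      (by intro x y; cases x <;> cases y <;> norm_num [pOne])
  · exact master E w ε Eγ wγ hγ _ []
      (by intro x y; cases x <;> cases y <;> norm_num [pZero])
end

section
/- For all integers n ≥ 2 and 1 ≤ m ≤ n(n−1)/2, there exists a weighted digraph G = (V, E, w) with |V| = 2n vertices, |E| = m edges and strictly positive weights, such that for every ε ∈ (0,1) and every predicate P ∈ {nOr, 01, Dicut, And}, every ε-P-sparsifier G_ε = (V, E_ε, w_ε) of G satisfies E_ε = E. (The graph G does not depend on P or ε.) -/
/-- `nOr(x,y) = 1` iff `x = y = 0`. -/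
def pNOr : Pred := fun x y => !(x || y)
/-- `Dicut(x,y) = 1` iff `(x,y) = (1,0)`. -/
def pDicut : Pred := fun x y => x && !y
/-- `01(x,y) = 1` iff `(x,y) = (0,1)`. -/
def p01 : Pred := fun x y => !x && y

/-! Take unit weights on `m` edges, all directed from a set `A` of `n` vertices to its
complement. For each edge `(a, b)` and each of the four predicates there is a set `S` on which
the predicate holds on `(a, b)` and on no other edge: `{a, b}` for `And`, its complement for
`nOr`, `(A \ {a}) ∪ {b}` for `01` and `(Aᶜ \ {b}) ∪ {a}` for `Dicut`. So `P_G(S) = 1`, while a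
reweighted subgraph without `(a, b)` has `P(S) = 0 < (1 - ε) P_G(S)`. -/

section EdgeIsolation

variable {V : Type} [DecidableEq V]

def IsolatesEdge (P : Pred) (E : Finset (V × V)) (S : Finset V) (e : V × V) : Prop :=
  ∀ e' ∈ E, P (decide (e'.1 ∈ S)) (decide (e'.2 ∈ S)) = true ↔ e' = e

theorem IsolatesEdge.mono {P : Pred} {E E' : Finset (V × V)} {S : Finset V} {e : V × V}
    (h : IsolatesEdge P E S e) (hE' : E' ⊆ E) : IsolatesEdge P E' S e :=
  fun e' he' => h e' (hE' he')

theorem IsolatesEdge.predVal_eq {P : Pred} {E : Finset (V × V)} {S : Finset V} {e : V × V}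
    (h : IsolatesEdge P E S e) (w : V × V → ℝ) :
    predVal P E w S = if e ∈ E then w e else 0 := by
  unfold predVal
  rw [← Finset.sum_ite_eq' E e w]
  exact Finset.sum_congr rfl fun e' he' => if_congr (h e' he') rfl rfl

theorem mem_of_isSparsifier_of_isolatesEdge {P : Pred} {E Eε : Finset (V × V)} {w wε : V × V → ℝ}
    {ε : ℝ} {S : Finset V} {e : V × V} (hsp : IsSparsifier P E w Eε wε ε) (hε : ε < 1)
    (he : e ∈ E) (hw : 0 < w e) (hS : IsolatesEdge P E S e) : e ∈ Eε := by
  by_contra heε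
  have hlower := (hsp.2.2 S).1
  rw [hS.predVal_eq, (hS.mono hsp.1).predVal_eq, if_pos he, if_neg heε] at hlower
  nlinarith

theorem eq_of_isSparsifier_of_forall_isolatesEdge {P : Pred} {E Eε : Finset (V × V)}
    {w wε : V × V → ℝ} {ε : ℝ} (hsp : IsSparsifier P E w Eε wε ε) (hε : ε < 1)
    (hw : ∀ e ∈ E, 0 < w e) (hiso : ∀ e ∈ E, ∃ S, IsolatesEdge P E S e) : Eε = E :=
  hsp.1.antisymm fun e he =>
    let ⟨_, hS⟩ := hiso e he
    mem_of_isSparsifier_of_isolatesEdge hsp hε he (hw e he) hS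

section Bipartite

variable [Fintype V] {E : Finset (V × V)} {A : Finset V} {a b : V}

theorem isolatesEdge_of_subset_product_compl {P : Pred} {S : Finset V}
    (hE : E ⊆ A ×ˢ Aᶜ)
    (hS : ∀ u ∈ A, ∀ v ∉ A, P (decide (u ∈ S)) (decide (v ∈ S)) = true ↔ u = a ∧ v = b) :
    IsolatesEdge P E S (a, b) := fun ⟨u, v⟩ huv => by
  obtain ⟨hu, hv⟩ := Finset.mem_product.1 (hE huv)
  rw [Finset.mem_compl] at hv
  rw [hS u hu v hv, Prod.mk.injEq]

theorem isolatesEdge_pAnd (hE : E ⊆ A ×ˢ Aᶜ) (ha : a ∈ A) (hb : b ∉ A) :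
    IsolatesEdge pAnd E {a, b} (a, b) :=
  isolatesEdge_of_subset_product_compl hE fun u hu v hv => by
    simp only [pAnd, Finset.mem_insert, Finset.mem_singleton]
    grind

theorem isolatesEdge_pNOr (hE : E ⊆ A ×ˢ Aᶜ) (ha : a ∈ A) (hb : b ∉ A) :
    IsolatesEdge pNOr E {a, b}ᶜ (a, b) :=
  isolatesEdge_of_subset_product_compl hE fun u hu v hv => by
    simp only [pNOr, Finset.mem_compl, Finset.mem_insert, Finset.mem_singleton]
    grind

theorem isolatesEdge_p01 (hE : E ⊆ A ×ˢ Aᶜ) (ha : a ∈ A) (hb : b ∉ A) :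
    IsolatesEdge p01 E (insert b (A.erase a)) (a, b) :=
  isolatesEdge_of_subset_product_compl hE fun u hu v hv => by
    simp only [p01, Finset.mem_insert, Finset.mem_erase]
    grind

theorem isolatesEdge_pDicut (hE : E ⊆ A ×ˢ Aᶜ) (ha : a ∈ A) (hb : b ∉ A) :
    IsolatesEdge pDicut E (insert a (Aᶜ.erase b)) (a, b) :=
  isolatesEdge_of_subset_product_compl hE fun u hu v hv => by
    simp only [pDicut, Finset.mem_insert, Finset.mem_compl, Finset.mem_erase]
    grind

theorem exists_isolatesEdge (hE : E ⊆ A ×ˢ Aᶜ) {P : Pred} (hP : P ∈ [pNOr, p01, pDicut, pAnd])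
    {e : V × V} (he : e ∈ E) : ∃ S, IsolatesEdge P E S e := by
  obtain ⟨a, b⟩ := e
  obtain ⟨ha, hb⟩ := Finset.mem_product.1 (hE he)
  rw [Finset.mem_compl] at hb
  simp only [List.mem_cons, List.not_mem_nil, or_false] at hP
  rcases hP with rfl | rfl | rfl | rfl
  · exact ⟨_, isolatesEdge_pNOr hE ha hb⟩
  · exact ⟨_, isolatesEdge_p01 hE ha hb⟩
  · exact ⟨_, isolatesEdge_pDicut hE ha hb⟩
  · exact ⟨_, isolatesEdge_pAnd hE ha hb⟩

end Bipartite

end EdgeIsolation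

theorem stmt7_general (n m : ℕ) (hm2 : m ≤ n * (n - 1) / 2) :
    ∃ (E : Finset (Fin (2 * n) × Fin (2 * n))) (w : Fin (2 * n) × Fin (2 * n) → ℝ),
      E.card = m ∧ (∀ e ∈ E, 0 < w e) ∧
      ∀ ε ∈ Set.Ioo (0 : ℝ) 1, ∀ P ∈ [pNOr, p01, pDicut, pAnd],
        ∀ (Eε : Finset (Fin (2 * n) × Fin (2 * n))) (wε : Fin (2 * n) × Fin (2 * n) → ℝ),
          IsSparsifier P E w Eε wε ε → Eε = E := by
  obtain ⟨A, -, hA⟩ := Finset.exists_subset_card_eq (s := Finset.univ (α := Fin (2 * n)))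
    (n := n) (by simp only [Finset.card_univ, Fintype.card_fin]; omega)
  have hm : m ≤ (A ×ˢ Aᶜ).card := by
    rw [Finset.card_product, Finset.card_compl, hA, Fintype.card_fin]
    calc m ≤ n * (n - 1) := hm2.trans (Nat.div_le_self _ _)
      _ ≤ n * (2 * n - n) := Nat.mul_le_mul_left _ (by omega)
  obtain ⟨E, hEA, hEm⟩ := Finset.exists_subset_card_eq hm
  refine ⟨E, fun _ => 1, hEm, fun _ _ => one_pos, ?_⟩
  rintro ε ⟨-, hε⟩ P hP Eε wε hsp
  exact eq_of_isSparsifier_of_forall_isolatesEdge hsp hε (fun _ _ => one_pos)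
    fun _ he => exists_isolatesEdge hEA hP he

/-- For all integers `n ≥ 2` and `1 ≤ m ≤ n(n−1)/2`, there is a weighted
digraph `G` on `2n` vertices with `m` edges and strictly positive weights such that for
every `ε ∈ (0,1)` and every `P ∈ {nOr, 01, Dicut, And}`, every `ε`-`P`-sparsifier of `G`
keeps all edges (the graph does not depend on `P` or `ε`). -/
theorem stmt7 (n m : ℕ) (hn : 2 ≤ n) (hm1 : 1 ≤ m) (hm2 : m ≤ n * (n - 1) / 2) :
    ∃ (E : Finset (Fin (2 * n) × Fin (2 * n))) (w : Fin (2 * n) × Fin (2 * n) → ℝ),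
      E.card = m ∧ (∀ e ∈ E, 0 < w e) ∧
      ∀ ε ∈ Set.Ioo (0 : ℝ) 1, ∀ P ∈ [pNOr, p01, pDicut, pAnd],
        ∀ (Eε : Finset (Fin (2 * n) × Fin (2 * n))) (wε : Fin (2 * n) × Fin (2 * n) → ℝ),
          IsSparsifier P E w Eε wε ε → Eε = E :=
  stmt7_general n m hm2
end

section
/- Let P : {0,1} × {0,1} → {0,1} be a predicate with exactly one satisfying input (i.e., |P⁻¹(1)| = 1), and let ε ∈ (0,1). Then for every integer n ≥ 2 there exists a weighted digraph G = (V, E, w) with |V| = 2n vertices, |E| = n(n−1)/2 edges and strictly positive weights, such that every ε-P-sparsifier G_ε = (V, E_ε, w_ε) of G satisfies E_ε = E; in particular, every ε-P-sparsifier of G has Ω(|V|²) edges. -/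
private theorem cardlt (n : ℕ) :
    (Finset.univ.filter fun p : Fin n × Fin n => p.1 < p.2).card = n * (n - 1) / 2 := by
  rw [Finset.card_filter, Fintype.sum_prod_type_right]
  have h : ∀ j : Fin n, (∑ i : Fin n, if (i, j).1 < (i, j).2 then 1 else 0) = (j : ℕ) := by
    intro j
    rw [← Finset.card_filter]
    rw [show (Finset.univ.filter fun i : Fin n => (i, j).1 < (i, j).2) = Finset.Iio j by
      ext i; simp [Finset.mem_Iio]]
    exact Fin.card_Iio j
  simp only [h]
  rw [Fin.sum_univ_eq_sum_range (fun i => i) n, Finset.sum_range_id]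

theorem stmt8 (P : Pred) (hP : ∃! p : Bool × Bool, P p.1 p.2 = true)
    (ε : ℝ) (hε : ε ∈ Set.Ioo (0 : ℝ) 1) (n : ℕ) (hn : 2 ≤ n) :
    ∃ (E : Finset (Fin (2 * n) × Fin (2 * n))) (w : Fin (2 * n) × Fin (2 * n) → ℝ),
      E.card = n * (n - 1) / 2 ∧ (∀ e ∈ E, 0 < w e) ∧
      ∀ (Eε : Finset (Fin (2 * n) × Fin (2 * n))) (wε : Fin (2 * n) × Fin (2 * n) → ℝ),
        IsSparsifier P E w Eε wε ε → Eε = E := by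
  classical
  obtain ⟨hε0, hε1⟩ := hε
  obtain ⟨⟨a, b⟩, hab, huniq⟩ := hP
  -- the embedding of pairs into the vertex set
  set f : Fin n × Fin n → Fin (2 * n) × Fin (2 * n) := fun p =>
    (⟨(p.1 : ℕ), by have := p.1.2; omega⟩, ⟨n + (p.2 : ℕ), by have := p.2.2; omega⟩) with hf
  have hfinj : Function.Injective f := by
    intro p q h
    simp only [hf, Prod.mk.injEq, Fin.mk.injEq] at h
    exact Prod.ext (Fin.ext h.1) (Fin.ext (by omega))
  refine ⟨(Finset.univ.filter fun p : Fin n × Fin n => p.1 < p.2).image f, fun _ => 1, ?_,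
    fun _ _ => one_pos, ?_⟩
  · rw [Finset.card_image_of_injective _ hfinj, cardlt]
  intro Eε wε ⟨hsub, hpos, hbound⟩
  refine Finset.Subset.antisymm hsub fun e he => ?_
  by_contra hne
  obtain ⟨p, hp, rfl⟩ := Finset.mem_image.mp he
  -- the distinguishing set
  set S : Finset (Fin (2 * n)) := Finset.univ.filter
    (fun x : Fin (2 * n) => if (x : ℕ) < n then (x = (f p).1 ↔ a = true)
      else (x = (f p).2 ↔ b = true)) with hS
  -- membership characterizations
  have hm1 : ∀ q : Fin n × Fin n, ((f q).1 ∈ S ↔ ((f q).1 = (f p).1 ↔ a = true)) := by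
    intro q
    have hq : ((f q).1 : ℕ) < n := q.1.2
    simp [hS, hq]
  have hm2 : ∀ q : Fin n × Fin n, ((f q).2 ∈ S ↔ ((f q).2 = (f p).2 ↔ b = true)) := by
    intro q
    have hq : ¬ ((f q).2 : ℕ) < n := by simp [hf]
    simp [hS, hq]
  -- the key claim: only the edge `f p` can satisfy `P` on `S`
  have key : ∀ q : Fin n × Fin n,
      (P (decide ((f q).1 ∈ S)) (decide ((f q).2 ∈ S)) = true) ↔ f q = f p := by
    intro q
    constructor
    · intro h
      have := huniq (decide ((f q).1 ∈ S), decide ((f q).2 ∈ S)) h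
      have hA : decide ((f q).1 ∈ S) = a := congrArg Prod.fst this
      have hB : decide ((f q).2 ∈ S) = b := congrArg Prod.snd this
      have hA' : ((f q).1 ∈ S) ↔ a = true := by rw [← hA]; simp
      have hB' : ((f q).2 ∈ S) ↔ b = true := by rw [← hB]; simp
      have h1 := (hm1 q).symm.trans hA'
      have h2 := (hm2 q).symm.trans hB'
      refine Prod.ext ?_ ?_
      · cases a <;> simp_all
      · cases b <;> simp_all
    · intro h
      rw [h]
      have h1 : (f p).1 ∈ S ↔ a = true := by rw [hm1 p]; simp
      have h2 : (f p).2 ∈ S ↔ b = true := by rw [hm2 p]; simp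
      have hA : decide ((f p).1 ∈ S) = a := by cases a <;> simp_all
      have hB : decide ((f p).2 ∈ S) = b := by cases b <;> simp_all
      rw [hA, hB]; exact hab
  have key' : ∀ e' ∈ (Finset.univ.filter fun p : Fin n × Fin n => p.1 < p.2).image f,
      (P (decide (e'.1 ∈ S)) (decide (e'.2 ∈ S)) = true) ↔ e' = f p := by
    intro e' he'
    obtain ⟨q, _, rfl⟩ := Finset.mem_image.mp he'
    exact key q
  -- evaluate `predVal` on the full graph
  have hEval : predVal P ((Finset.univ.filter fun p : Fin n × Fin n => p.1 < p.2).image f)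
      (fun _ => 1) S = 1 := by
    unfold predVal
    rw [Finset.sum_congr rfl (fun e' he' => by
      rw [show (if P (decide (e'.1 ∈ S)) (decide (e'.2 ∈ S)) then (1:ℝ) else 0)
            = if e' = f p then (1:ℝ) else 0 by
        by_cases h : P (decide (e'.1 ∈ S)) (decide (e'.2 ∈ S)) = true
        · rw [if_pos h, if_pos ((key' e' he').mp h)]
        · rw [if_neg h, if_neg (fun hc => h ((key' e' he').mpr hc))]])]
    rw [Finset.sum_ite_eq' _ (f p) (fun _ => (1:ℝ))]
    simp [he]
  -- evaluate `predVal` on the sparsifier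
  have hEvalε : predVal P Eε wε S = 0 := by
    unfold predVal
    refine Finset.sum_eq_zero fun e' he' => ?_
    have hne' : e' ≠ f p := fun hc => hne (hc ▸ he')
    rw [if_neg (fun h => hne' ((key' e' (hsub he')).mp h))]
  have := (hbound S).1
  rw [hEval, hEvalε] at this
  linarith
end

section
/- There is a constant c > 0 such that for every predicate P ∈ {Cut, unCut, Or, nAnd, 10̄, 01̄}, every integer n and every ε ∈ (1/√n, 1), there exists an n-vertex weighted digraph G such that every ε-P-sparsifier of G has at least c·n/ε² edges. -/
/-!
The hard instance is a disjoint union of `m ≈ n / (2d)` directed complete bipartite graphs `K_{d,d}`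
with unit weights, with `d ≈ 1 / ε²`. Labelling one block by `x, y ∈ {0,1}^d` and every other
vertex by a pair `ν` with `P ν = 0` isolates that block, and inclusion–exclusion over the four
values of `P` (possible since `P` is not a sum `f a + g b`, i.e. `mixedDiff P ≠ 0`) turns the
sparsifier guarantee into `|xᵀ D y| ≤ 4 ε d²` for the error matrix `D = kept weight - 1`.
Choosing the best `x` for each `y`, averaging over `y` and Khintchine's inequality (from the second
and fourth moments of Rademacher sums) bound the row norms of `D`, while every dropped edge is an
entry `-1` of `D`; hence each block keeps half of its `d²` edges, `Ω(n / ε²)` in total. When `ε` is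
bounded below, blocks with `d = 1` each keep their single edge.
-/

open Finset

def boolInd (b : Bool) : ℝ := if b then 1 else 0

def boolSign (b : Bool) : ℝ := if b then 1 else -1

lemma boolInd_nonneg (b : Bool) : 0 ≤ boolInd b := by cases b <;> simp [boolInd]

lemma boolInd_le_one (b : Bool) : boolInd b ≤ 1 := by cases b <;> simp [boolInd]

lemma sum_sq_pow_three_le {ι : Type*} (s : Finset ι) (f : ι → ℝ) :
    (∑ i ∈ s, f i ^ 2) ^ 3 ≤ (∑ i ∈ s, |f i|) ^ 2 * ∑ i ∈ s, f i ^ 4 := by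
  set A := ∑ i ∈ s, |f i|
  set B := ∑ i ∈ s, f i ^ 2
  set C := ∑ i ∈ s, |f i| ^ 3
  set F := ∑ i ∈ s, f i ^ 4
  have hAC : B ^ 2 ≤ A * C := sum_sq_le_sum_mul_sum_of_sq_le_mul s
    (fun i _ => abs_nonneg (f i)) (fun i _ => by positivity)
    (fun i _ => le_of_eq (by rw [← sq_abs (f i)]; ring))
  have hCF : C ^ 2 ≤ B * F := sum_sq_le_sum_mul_sum_of_sq_le_mul s
    (fun i _ => sq_nonneg (f i)) (fun i _ => by positivity)
    (fun i _ => le_of_eq (by rw [show f i ^ 4 = (f i ^ 2) ^ 2 by ring, ← sq_abs (f i)]; ring))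
  have hB : 0 ≤ B := sum_nonneg fun i _ => sq_nonneg (f i)
  rcases hB.eq_or_lt with hB0 | hBpos
  · rw [← hB0, zero_pow three_ne_zero]
    exact mul_nonneg (sq_nonneg A) (sum_nonneg fun i _ => by positivity)
  · have : B * B ^ 3 ≤ B * (A ^ 2 * F) := calc
      B * B ^ 3 = (B ^ 2) ^ 2 := by ring
      _ ≤ (A * C) ^ 2 := pow_le_pow_left₀ (sq_nonneg B) hAC 2
      _ = A ^ 2 * C ^ 2 := by ring
      _ ≤ A ^ 2 * (B * F) := mul_le_mul_of_nonneg_left hCF (sq_nonneg A)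
      _ = B * (A ^ 2 * F) := by ring
    exact le_of_mul_le_mul_left this hBpos

section Khintchine

variable {d : ℕ}

def rademacherSum (c : Fin d → ℝ) (y : Fin d → Bool) : ℝ := ∑ k, c k * boolSign (y k)

lemma rademacherSum_cons (c : Fin (d + 1) → ℝ) (b : Bool) (y : Fin d → Bool) :
    rademacherSum c (Fin.cons b y) = c 0 * boolSign b + rademacherSum (fun k => c k.succ) y := by
  simp [rademacherSum, Fin.sum_univ_succ]

lemma sum_cube_succ (F : (Fin (d + 1) → Bool) → ℝ) :
    ∑ y, F y = ∑ y : Fin d → Bool, (F (Fin.cons true y) + F (Fin.cons false y)) := by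
  rw [← (Fin.consEquiv fun _ => Bool).sum_comp, Fintype.sum_prod_type, Fintype.sum_bool,
    ← sum_add_distrib]
  rfl

lemma sum_rademacherSum_sq (c : Fin d → ℝ) :
    ∑ y, rademacherSum c y ^ 2 = 2 ^ d * ∑ k, c k ^ 2 := by
  induction d with
  | zero => simp [rademacherSum]
  | succ d ih =>
    have hpair (X : ℝ) : (c 0 * boolSign true + X) ^ 2 + (c 0 * boolSign false + X) ^ 2
        = 2 * c 0 ^ 2 + 2 * X ^ 2 := by simp only [boolSign, ↓reduceIte, Bool.false_eq_true]; ring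
    simp only [sum_cube_succ, rademacherSum_cons, hpair, sum_add_distrib, ← mul_sum, ih,
      sum_const, card_univ, Fintype.card_fun, Fintype.card_bool, Fintype.card_fin, nsmul_eq_mul,
      Fin.sum_univ_succ]
    push_cast
    ring

lemma sum_rademacherSum_pow_four_le (c : Fin d → ℝ) :
    ∑ y, rademacherSum c y ^ 4 ≤ 3 * 2 ^ d * (∑ k, c k ^ 2) ^ 2 := by
  induction d with
  | zero => simp [rademacherSum]
  | succ d ih =>
    have hpair (X : ℝ) : (c 0 * boolSign true + X) ^ 4 + (c 0 * boolSign false + X) ^ 4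
        = 2 * c 0 ^ 4 + 12 * c 0 ^ 2 * X ^ 2 + 2 * X ^ 4 := by
      simp only [boolSign, ↓reduceIte, Bool.false_eq_true]; ring
    have hfour := ih (fun k => c k.succ)
    have hsq := sum_rademacherSum_sq (fun k => c k.succ)
    simp only [sum_cube_succ, rademacherSum_cons, hpair, sum_add_distrib, ← mul_sum, hsq,
      sum_const, card_univ, Fintype.card_fun, Fintype.card_bool, Fintype.card_fin, nsmul_eq_mul,
      Fin.sum_univ_succ]
    push_cast
    rw [pow_succ (2 : ℝ) d]
    have h2d : (0 : ℝ) ≤ 2 ^ d * c 0 ^ 4 := by positivity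
    nlinarith

lemma khintchine (c : Fin d → ℝ) :
    (2 ^ d) ^ 2 * ∑ k, c k ^ 2 ≤ 3 * (∑ y, |rademacherSum c y|) ^ 2 := by
  set S := ∑ k, c k ^ 2
  set A := ∑ y, |rademacherSum c y|
  have h := sum_sq_pow_three_le univ (rademacherSum c)
  rw [sum_rademacherSum_sq] at h
  have h4 := mul_le_mul_of_nonneg_left (sum_rademacherSum_pow_four_le c) (sq_nonneg A)
  have hS : 0 ≤ S := sum_nonneg fun k _ => sq_nonneg (c k)
  rcases hS.eq_or_lt with hS0 | hSpos
  · rw [← hS0, mul_zero]; positivity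
  · refine le_of_mul_le_mul_right ?_ (by positivity : (0 : ℝ) < 2 ^ d * S ^ 2)
    calc (2 ^ d) ^ 2 * S * (2 ^ d * S ^ 2) = (2 ^ d * S) ^ 3 := by ring
      _ ≤ A ^ 2 * (3 * 2 ^ d * S ^ 2) := h.trans h4
      _ = 3 * A ^ 2 * (2 ^ d * S ^ 2) := by ring

lemma rademacherSum_eq_sub (c : Fin d → ℝ) (y : Fin d → Bool) :
    rademacherSum c y = ∑ k, c k * boolInd (y k) - ∑ k, c k * boolInd (!y k) := by
  rw [rademacherSum, ← sum_sub_distrib]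
  refine sum_congr rfl fun k _ => ?_
  cases y k <;> simp [boolSign, boolInd]

lemma sum_abs_rademacherSum_le (c : Fin d → ℝ) :
    ∑ y, |rademacherSum c y| ≤ 2 * ∑ y : Fin d → Bool, |∑ k, c k * boolInd (y k)| := by
  have hflip : ∑ y : Fin d → Bool, |∑ k, c k * boolInd (!y k)|
      = ∑ y : Fin d → Bool, |∑ k, c k * boolInd (y k)| :=
    Fintype.sum_equiv (Equiv.piCongrRight fun _ => Equiv.boolNot) _ _ fun _ => rfl
  calc ∑ y, |rademacherSum c y|
      ≤ ∑ y, (|∑ k, c k * boolInd (y k)| + |∑ k, c k * boolInd (!y k)|) :=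
        sum_le_sum fun y _ => by rw [rademacherSum_eq_sub]; exact abs_sub _ _
    _ = 2 * ∑ y : Fin d → Bool, |∑ k, c k * boolInd (y k)| := by
        rw [sum_add_distrib, hflip]; ring

lemma two_pow_mul_sqrt_sum_sq_le (c : Fin d → ℝ) :
    2 ^ d * √(∑ k, c k ^ 2) ≤ 2 * √3 * ∑ y : Fin d → Bool, |∑ k, c k * boolInd (y k)| := by
  have hS : 0 ≤ ∑ k, c k ^ 2 := sum_nonneg fun k _ => sq_nonneg (c k)
  refine (pow_le_pow_iff_left₀ (by positivity) (by positivity) two_ne_zero).1 ?_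
  calc (2 ^ d * √(∑ k, c k ^ 2)) ^ 2 = (2 ^ d) ^ 2 * ∑ k, c k ^ 2 := by
        rw [mul_pow, Real.sq_sqrt hS]
    _ ≤ 3 * (∑ y, |rademacherSum c y|) ^ 2 := khintchine c
    _ ≤ 3 * (2 * ∑ y : Fin d → Bool, |∑ k, c k * boolInd (y k)|) ^ 2 := by
        gcongr; exact sum_abs_rademacherSum_le c
    _ = (2 * √3 * ∑ y : Fin d → Bool, |∑ k, c k * boolInd (y k)|) ^ 2 := by
        simp only [mul_pow, Real.sq_sqrt (show (0 : ℝ) ≤ 3 by norm_num)]; ring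

end Khintchine

lemma sum_abs_le_two_mul {ι : Type*} [Fintype ι] (f : ι → ℝ) {C : ℝ}
    (h : ∀ x : ι → Bool, |∑ i, boolInd (x i) * f i| ≤ C) : ∑ i, |f i| ≤ 2 * C := by
  have hsplit : ∑ i, |f i|
      = ∑ i, boolInd (decide (0 < f i)) * f i - ∑ i, boolInd (decide (f i < 0)) * f i := by
    rw [← sum_sub_distrib]
    refine sum_congr rfl fun i _ => ?_
    rcases lt_trichotomy (f i) 0 with hi | hi | hi
    · simp [boolInd, hi, hi.not_gt, abs_of_neg hi]
    · simp [boolInd, hi]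
    · simp [boolInd, hi, hi.not_gt, abs_of_pos hi]
  rw [hsplit, two_mul]
  exact (le_abs_self _).trans ((abs_sub _ _).trans (add_le_add (h _) (h _)))

lemma sum_sqrt_sum_sq_le {ι : Type*} [Fintype ι] {d : ℕ} (D : ι → Fin d → ℝ) {C : ℝ}
    (h : ∀ (x : ι → Bool) (y : Fin d → Bool),
      |∑ j, ∑ k, D j k * boolInd (x j) * boolInd (y k)| ≤ C) :
    ∑ j, √(∑ k, D j k ^ 2) ≤ 4 * √3 * C := by
  have hrow (y : Fin d → Bool) : ∑ j, |∑ k, D j k * boolInd (y k)| ≤ 2 * C :=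
    sum_abs_le_two_mul _ fun x => by
      convert h x y using 2
      simp only [mul_sum]
      exact sum_congr rfl fun j _ => sum_congr rfl fun k _ => by ring
  refine le_of_mul_le_mul_left ?_ (by positivity : (0 : ℝ) < 2 ^ d)
  calc 2 ^ d * ∑ j, √(∑ k, D j k ^ 2) = ∑ j, 2 ^ d * √(∑ k, D j k ^ 2) := mul_sum _ _ _
    _ ≤ ∑ j, 2 * √3 * ∑ y : Fin d → Bool, |∑ k, D j k * boolInd (y k)| :=
        sum_le_sum fun j _ => two_pow_mul_sqrt_sum_sq_le (D j)
    _ = 2 * √3 * ∑ y : Fin d → Bool, ∑ j, |∑ k, D j k * boolInd (y k)| := by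
        rw [← mul_sum, sum_comm]
    _ ≤ 2 * √3 * ∑ _y : Fin d → Bool, 2 * C := by gcongr with y; exact hrow y
    _ = 2 ^ d * (4 * √3 * C) := by
        simp only [sum_const, card_univ, Fintype.card_pi, Fintype.card_bool, prod_const,
          Fintype.card_fin, nsmul_eq_mul, Nat.cast_pow, Nat.cast_ofNat]
        ring

lemma card_one_le_abs_le {ι κ : Type*} [Fintype ι] [Fintype κ] (D : ι → κ → ℝ) :
    (#(univ.filter fun p : ι × κ => 1 ≤ |D p.1 p.2|) : ℝ)
      ≤ √(Fintype.card κ) * ∑ j, √(∑ k, D j k ^ 2) := by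
  rw [card_filter, Fintype.sum_prod_type, Nat.cast_sum, mul_sum]
  refine sum_le_sum fun j _ => ?_
  push_cast
  set z := ∑ k, if 1 ≤ |D j k| then (1 : ℝ) else 0
  have hz0 : 0 ≤ z := sum_nonneg fun k _ => by split_ifs <;> norm_num
  have hzS : z ≤ ∑ k, D j k ^ 2 := sum_le_sum fun k _ => by
    split_ifs with hk
    · exact one_le_sq_iff_one_le_abs _ |>.2 hk
    · exact sq_nonneg _
  have hzκ : z ≤ Fintype.card κ :=
    (sum_le_sum fun k _ => by split_ifs <;> norm_num : z ≤ ∑ _k : κ, (1 : ℝ)).trans (by simp)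
  rw [← Real.sqrt_mul (Nat.cast_nonneg _), Real.le_sqrt hz0 (by positivity)]
  nlinarith

def mixedDiff (P : Pred) : ℝ :=
  boolInd (P true true) - boolInd (P true false) - boolInd (P false true) + boolInd (P false false)

lemma mixedDiff_mul_boolInd_mul_boolInd (P : Pred) (a b : Bool) :
    mixedDiff P * (boolInd a * boolInd b)
      = boolInd (P a b) - boolInd (P a false) - boolInd (P false b) + boolInd (P false false) := by
  cases a <;> cases b <;> simp [mixedDiff, boolInd]

lemma one_le_abs_mixedDiff {P : Pred} (hP : mixedDiff P ≠ 0) : 1 ≤ |mixedDiff P| := by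
  revert hP
  unfold mixedDiff
  cases P true true <;> cases P true false <;> cases P false true <;> cases P false false <;>
    norm_num [boolInd]

lemma exists_eq_of_mixedDiff_ne_zero {P : Pred} (hP : mixedDiff P ≠ 0) (t : Bool) :
    ∃ a b, P a b = t := by
  by_contra! h
  have hconst (a b : Bool) : P a b = !t := by cases t <;> simpa using h a b
  simp [mixedDiff, hconst] at hP

lemma abs_sum_boolInd_mul_boolInd_le {ι κ : Type*} [Fintype ι] [Fintype κ] {P : Pred}
    (hP : mixedDiff P ≠ 0) (D : ι → κ → ℝ) {C : ℝ}
    (h : ∀ (x : ι → Bool) (y : κ → Bool), |∑ j, ∑ k, D j k * boolInd (P (x j) (y k))| ≤ C)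
    (x : ι → Bool) (y : κ → Bool) :
    |∑ j, ∑ k, D j k * boolInd (x j) * boolInd (y k)| ≤ 4 * C := by
  set F := fun (x : ι → Bool) (y : κ → Bool) => ∑ j, ∑ k, D j k * boolInd (P (x j) (y k))
  set o : ι → Bool := fun _ => false
  set o' : κ → Bool := fun _ => false
  have hF : mixedDiff P * ∑ j, ∑ k, D j k * boolInd (x j) * boolInd (y k)
      = F x y - F x o' - F o y + F o o' := by
    simp only [F, o, o', mul_sum, ← sum_sub_distrib, ← sum_add_distrib]
    refine sum_congr rfl fun j _ => sum_congr rfl fun k _ => ?_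
    linear_combination D j k * mixedDiff_mul_boolInd_mul_boolInd P (x j) (y k)
  have h1 := abs_le.1 (h x y)
  have h2 := abs_le.1 (h x o')
  have h3 := abs_le.1 (h o y)
  have h4 := abs_le.1 (h o o')
  calc |∑ j, ∑ k, D j k * boolInd (x j) * boolInd (y k)|
      ≤ |mixedDiff P| * |∑ j, ∑ k, D j k * boolInd (x j) * boolInd (y k)| :=
        le_mul_of_one_le_left (abs_nonneg _) (one_le_abs_mixedDiff hP)
    _ = |F x y - F x o' - F o y + F o o'| := by rw [← abs_mul, hF]
    _ ≤ 4 * C := abs_le.2 ⟨by linarith, by linarith⟩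

section BlockGraph

variable {V : Type} [DecidableEq V] {m d : ℕ} (φ : Fin m × Bool × Fin d ↪ V)

def blockEdge (p : Fin m × Fin d × Fin d) : V × V :=
  (φ (p.1, false, p.2.1), φ (p.1, true, p.2.2))

omit [DecidableEq V] in
lemma blockEdge_injective : Function.Injective (blockEdge φ) := by
  rintro ⟨i, j, k⟩ ⟨i', j', k'⟩ h
  simp only [blockEdge, Prod.mk.injEq, φ.injective.eq_iff] at h
  obtain ⟨⟨rfl, -, rfl⟩, -, -, rfl⟩ := h
  rfl

def blockGraph : Finset (V × V) := univ.map ⟨blockEdge φ, blockEdge_injective φ⟩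

def labelSet (σ : Fin m × Bool × Fin d → Bool) : Finset V := (univ.filter fun q => σ q).map φ

omit [DecidableEq V] in
lemma mem_labelSet (σ : Fin m × Bool × Fin d → Bool) (q : Fin m × Bool × Fin d) :
    φ q ∈ labelSet φ σ ↔ σ q = true := by
  simp [labelSet]

def keptWeight (Eε : Finset (V × V)) (wε : V × V → ℝ) (p : Fin m × Fin d × Fin d) : ℝ :=
  if blockEdge φ p ∈ Eε then wε (blockEdge φ p) else 0

lemma keptWeight_blockGraph (p : Fin m × Fin d × Fin d) :
    keptWeight φ (blockGraph φ) (fun _ => 1) p = 1 := by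
  simp [keptWeight, blockGraph]

lemma predVal_labelSet (P : Pred) {Eε : Finset (V × V)} (wε : V × V → ℝ)
    (hsub : Eε ⊆ blockGraph φ) (σ : Fin m × Bool × Fin d → Bool) :
    predVal P Eε wε (labelSet φ σ)
      = ∑ p, keptWeight φ Eε wε p *
          boolInd (P (σ (p.1, false, p.2.1)) (σ (p.1, true, p.2.2))) := by
  conv_lhs => rw [predVal, ← inter_eq_right.2 hsub, ← sum_ite_mem, blockGraph, sum_map]
  refine sum_congr rfl fun p _ => ?_
  simp only [Function.Embedding.coeFn_mk, keptWeight, blockEdge, boolInd, mem_labelSet,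
    Bool.decide_eq_true]
  split_ifs <;> simp_all

def blockLabel (ν : Bool × Bool) (i₀ : Fin m) (x y : Fin d → Bool) (q : Fin m × Bool × Fin d) :
    Bool :=
  if q.1 = i₀ then (bif q.2.1 then y q.2.2 else x q.2.2) else (bif q.2.1 then ν.2 else ν.1)

lemma sum_blockLabel {P : Pred} {ν : Bool × Bool} (hν : P ν.1 ν.2 = false)
    (W : Fin m × Fin d × Fin d → ℝ) (i₀ : Fin m) (x y : Fin d → Bool) :
    ∑ p, W p * boolInd (P (blockLabel ν i₀ x y (p.1, false, p.2.1))
        (blockLabel ν i₀ x y (p.1, true, p.2.2)))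
      = ∑ j, ∑ k, W (i₀, j, k) * boolInd (P (x j) (y k)) := by
  rw [Fintype.sum_prod_type, sum_eq_single i₀, Fintype.sum_prod_type]
  · simp [blockLabel]
  · intro i _ hi
    simp [blockLabel, hi, hν, boolInd]
  · simp


def keptEdges (Eε : Finset (V × V)) (i : Fin m) : Finset (Fin d × Fin d) :=
  univ.filter fun jk => blockEdge φ (i, jk.1, jk.2) ∈ Eε

lemma sum_card_keptEdges_le (Eε : Finset (V × V)) : ∑ i, #(keptEdges φ Eε i) ≤ #Eε :=
  calc ∑ i, #(keptEdges φ Eε i) = #(univ.filter fun p => blockEdge φ p ∈ Eε) := by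
        simp only [keptEdges, card_filter, Fintype.sum_prod_type]
    _ ≤ #Eε := card_le_card_of_injOn _ (fun p hp => (mem_filter.1 hp).2)
        (blockEdge_injective φ).injOn

end BlockGraph

section Sparsifier

variable {V : Type} [DecidableEq V] {m d : ℕ} (φ : Fin m × Bool × Fin d ↪ V) {P : Pred}
  {Eε : Finset (V × V)} {wε : V × V → ℝ} {ε : ℝ}

lemma IsSparsifier.blockGraph_bounds {ν : Bool × Bool} (hν : P ν.1 ν.2 = false)
    (hsp : IsSparsifier P (blockGraph φ) (fun _ => 1) Eε wε ε) (i : Fin m)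
    (x y : Fin d → Bool) :
    (1 - ε) * ∑ j, ∑ k, boolInd (P (x j) (y k))
        ≤ ∑ j, ∑ k, keptWeight φ Eε wε (i, j, k) * boolInd (P (x j) (y k)) ∧
      ∑ j, ∑ k, keptWeight φ Eε wε (i, j, k) * boolInd (P (x j) (y k))
        ≤ (1 + ε) * ∑ j, ∑ k, boolInd (P (x j) (y k)) := by
  have hG := predVal_labelSet φ P (fun _ => 1) subset_rfl (blockLabel ν i x y)
  have hH := predVal_labelSet φ P wε hsp.1 (blockLabel ν i x y)
  rw [sum_blockLabel hν] at hG hH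
  simp only [keptWeight_blockGraph, one_mul] at hG
  simpa only [hG, hH] using hsp.2.2 (labelSet φ (blockLabel ν i x y))

lemma IsSparsifier.abs_sum_keptWeight_sub_one_le {ν : Bool × Bool} (hν : P ν.1 ν.2 = false)
    (hsp : IsSparsifier P (blockGraph φ) (fun _ => 1) Eε wε ε) (hε : 0 ≤ ε) (i : Fin m)
    (x y : Fin d → Bool) :
    |∑ j, ∑ k, (keptWeight φ Eε wε (i, j, k) - 1) * boolInd (P (x j) (y k))| ≤ ε * d ^ 2 := by
  obtain ⟨hlo, hhi⟩ := hsp.blockGraph_bounds φ hν i x y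
  have hG0 : 0 ≤ ∑ j, ∑ k, boolInd (P (x j) (y k)) :=
    sum_nonneg fun j _ => sum_nonneg fun k _ => boolInd_nonneg _
  have hGd : ∑ j, ∑ k, boolInd (P (x j) (y k)) ≤ d ^ 2 :=
    (sum_le_sum fun j _ => sum_le_sum fun k _ => boolInd_le_one _).trans (by simp [sq])
  simp only [sub_mul, one_mul, sum_sub_distrib]
  rw [abs_le]
  constructor <;> nlinarith

lemma IsSparsifier.keptEdges_nonempty (hP : mixedDiff P ≠ 0)
    (hsp : IsSparsifier P (blockGraph φ) (fun _ => 1) Eε wε ε) (hε : ε < 1) (hd : 0 < d)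
    (i : Fin m) : (keptEdges φ Eε i).Nonempty := by
  obtain ⟨a, b, hab⟩ := exists_eq_of_mixedDiff_ne_zero hP true
  obtain ⟨a', b', hν⟩ := exists_eq_of_mixedDiff_ne_zero hP false
  obtain ⟨hlo, -⟩ := hsp.blockGraph_bounds φ (ν := (a', b')) hν i (fun _ => a) (fun _ => b)
  by_contra hempty
  have hzero (j k : Fin d) : keptWeight φ Eε wε (i, j, k) = 0 := by
    have : blockEdge φ (i, j, k) ∉ Eε := fun h =>
      hempty ⟨(j, k), mem_filter.2 ⟨mem_univ _, h⟩⟩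
    simp [keptWeight, this]
  simp only [hab, hzero, sum_const_zero, boolInd, ↓reduceIte, sum_const, card_univ,
    Fintype.card_fin, nsmul_eq_mul, mul_one] at hlo
  have hd' : (0 : ℝ) < d := by exact_mod_cast hd
  linarith [mul_pos (sub_pos.2 hε) (mul_pos hd' hd')]

lemma IsSparsifier.card_keptEdges_ge (hP : mixedDiff P ≠ 0)
    (hsp : IsSparsifier P (blockGraph φ) (fun _ => 1) Eε wε ε) (hε : 0 ≤ ε)
    (hεd : ε ^ 2 * d ≤ 1 / 4096) (i : Fin m) : (d : ℝ) ^ 2 / 2 ≤ #(keptEdges φ Eε i) := by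
  obtain ⟨a, b, hν⟩ := exists_eq_of_mixedDiff_ne_zero hP false
  set D : Fin d → Fin d → ℝ := fun j k => keptWeight φ Eε wε (i, j, k) - 1
  have hrows : ∑ j, √(∑ k, D j k ^ 2) ≤ 4 * √3 * (4 * (ε * d ^ 2)) :=
    sum_sqrt_sum_sq_le D <| abs_sum_boolInd_mul_boolInd_le hP D
      (hsp.abs_sum_keptWeight_sub_one_le φ (ν := (a, b)) hν hε i)
  have hsmall : √d * (4 * √3 * (4 * (ε * d ^ 2))) ≤ d ^ 2 / 2 := by
    have h3 : √3 * √d * ε ≤ 1 / 32 := by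
      rw [← Real.sqrt_mul (by norm_num), ← Real.sqrt_sq hε, ← Real.sqrt_mul (by positivity),
        Real.sqrt_le_left (by norm_num)]
      nlinarith
    have : (0 : ℝ) ≤ d ^ 2 := by positivity
    nlinarith
  have hmissing : (keptEdges φ Eε i)ᶜ ⊆ univ.filter fun jk => 1 ≤ |D jk.1 jk.2| :=
    fun jk hjk => by simp_all [keptEdges, D, keptWeight]
  have hcompl : (#(keptEdges φ Eε i)ᶜ : ℝ) ≤ d ^ 2 / 2 := calc
    _ ≤ (#(univ.filter fun jk : Fin d × Fin d => 1 ≤ |D jk.1 jk.2|) : ℝ) := by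
        exact_mod_cast card_le_card hmissing
    _ ≤ √d * ∑ j, √(∑ k, D j k ^ 2) := by simpa using card_one_le_abs_le D
    _ ≤ √d * (4 * √3 * (4 * (ε * d ^ 2))) := by gcongr
    _ ≤ d ^ 2 / 2 := hsmall
  have hsplit : (#(keptEdges φ Eε i) : ℝ) + #(keptEdges φ Eε i)ᶜ = d ^ 2 := by
    exact_mod_cast (by simp [sq] : #(keptEdges φ Eε i) + #(keptEdges φ Eε i)ᶜ = d ^ 2)
  linarith

lemma IsSparsifier.card_ge_of_lt_one
    (hP : mixedDiff P ≠ 0) (hsp : IsSparsifier P (blockGraph φ) (fun _ => 1) Eε wε ε)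
    (hε : ε < 1) (hd : 0 < d) : m ≤ #Eε :=
  calc m = ∑ _i : Fin m, 1 := by simp
    _ ≤ ∑ i, #(keptEdges φ Eε i) :=
        sum_le_sum fun i _ => (hsp.keptEdges_nonempty φ hP hε hd i).card_pos
    _ ≤ #Eε := sum_card_keptEdges_le φ Eε

lemma IsSparsifier.card_ge_of_sq_mul_le
    (hP : mixedDiff P ≠ 0) (hsp : IsSparsifier P (blockGraph φ) (fun _ => 1) Eε wε ε)
    (hε : 0 ≤ ε) (hεd : ε ^ 2 * d ≤ 1 / 4096) : m * ((d : ℝ) ^ 2 / 2) ≤ #Eε :=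
  calc m * ((d : ℝ) ^ 2 / 2) = ∑ _i : Fin m, (d : ℝ) ^ 2 / 2 := by simp
    _ ≤ ∑ i, (#(keptEdges φ Eε i) : ℝ) :=
        sum_le_sum fun i _ => hsp.card_keptEdges_ge φ hP hε hεd i
    _ ≤ #Eε := by exact_mod_cast sum_card_keptEdges_le φ Eε

end Sparsifier

def ExistsHardGraph (P : Pred) (n : ℕ) (ε b : ℝ) : Prop :=
  ∃ (E : Finset (Fin n × Fin n)) (w : Fin n × Fin n → ℝ), (∀ e ∈ E, 0 < w e) ∧
    ∀ (Eε : Finset (Fin n × Fin n)) (wε : Fin n × Fin n → ℝ),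
      IsSparsifier P E w Eε wε ε → b ≤ #Eε

lemma existsHardGraph_of_blockGraph {P : Pred} {n m d : ℕ} {ε b : ℝ}
    (hcard : m * (2 * d) ≤ n)
    (h : ∀ (φ : Fin m × Bool × Fin d ↪ Fin n) (Eε : Finset (Fin n × Fin n)) wε,
      IsSparsifier P (blockGraph φ) (fun _ => 1) Eε wε ε → b ≤ #Eε) :
    ExistsHardGraph P n ε b := by
  obtain ⟨φ⟩ : Nonempty (Fin m × Bool × Fin d ↪ Fin n) :=
    Function.Embedding.nonempty_of_card_le (by simpa [mul_left_comm] using hcard)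
  exact ⟨blockGraph φ, fun _ => 1, fun _ _ => one_pos, h φ⟩

lemma existsHardGraph_of_large {P : Pred} (hP : mixedDiff P ≠ 0) {n : ℕ} {ε : ℝ}
    (hε0 : 0 < ε) (hε : ε < 1) (hnε : 1 < n * ε ^ 2) (hlarge : 1 / 4096 < ε ^ 2) :
    ExistsHardGraph P n ε (1 / 65536 * n / ε ^ 2) := by
  refine existsHardGraph_of_blockGraph (m := n / 2) (d := 1) (by omega)
    fun φ Eε wε hsp => le_trans ?_ (Nat.cast_le.2 (hsp.card_ge_of_lt_one φ hP hε one_pos))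
  have hn : (n : ℝ) ≤ 2 * (n / 2 : ℕ) + 1 := by exact_mod_cast (by omega : n ≤ 2 * (n / 2) + 1)
  have hn2 : 2 ≤ n := by
    have : ε ^ 2 < 1 := pow_lt_one₀ hε0.le hε two_ne_zero
    have : (1 : ℝ) < n := by nlinarith
    exact_mod_cast this
  have hm : (n : ℝ) / 4 ≤ (n / 2 : ℕ) := by
    have : (2 : ℝ) ≤ n := by exact_mod_cast hn2
    linarith
  rw [div_le_iff₀ (by positivity)]
  calc 1 / 65536 * (n : ℝ) ≤ n / 4 * (1 / 4096) := by linarith [(Nat.cast_nonneg n : (0 : ℝ) ≤ n)]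
    _ ≤ (n / 2 : ℕ) * ε ^ 2 := mul_le_mul hm hlarge.le (by norm_num) (Nat.cast_nonneg _)

lemma existsHardGraph_of_small {P : Pred} (hP : mixedDiff P ≠ 0) {n : ℕ} {ε : ℝ}
    (hε : 0 < ε) (hnε : 1 < n * ε ^ 2) (hsmall : ε ^ 2 ≤ 1 / 4096) :
    ExistsHardGraph P n ε (1 / 65536 * n / ε ^ 2) := by
  set t := 1 / (4096 * ε ^ 2)
  have ht : 1 ≤ t := by rw [le_div_iff₀ (by positivity)]; linarith
  set d := ⌊t⌋₊
  have hd : 0 < d := Nat.floor_pos.2 ht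
  have hdt : (d : ℝ) ≤ t := Nat.floor_le (by positivity)
  have htd : t < d + 1 := Nat.lt_floor_add_one t
  have htε : t * (4096 * ε ^ 2) = 1 := by simp only [t]; field_simp
  have hεd : ε ^ 2 * d ≤ 1 / 4096 := by nlinarith
  refine existsHardGraph_of_blockGraph (m := n / (2 * d)) (d := d) (Nat.div_mul_le_self _ _)
    fun φ Eε wε hsp => le_trans ?_ (hsp.card_ge_of_sq_mul_le φ hP hε.le hεd)
  have hn : (n : ℝ) < (n / (2 * d) : ℕ) * (2 * d) + 2 * d := by
    exact_mod_cast Nat.lt_div_mul_add (by omega : 0 < 2 * d)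
  have h8192 : 1 ≤ 8192 * d * ε ^ 2 := by
    have hd1 : (1 : ℝ) ≤ d := by exact_mod_cast hd
    nlinarith [mul_lt_mul_of_pos_right (show t < 2 * d by linarith)
      (by positivity : (0 : ℝ) < 4096 * ε ^ 2)]
  rw [div_le_iff₀ (by positivity)]
  nlinarith

lemma existsHardGraph {P : Pred} (hP : mixedDiff P ≠ 0) (n : ℕ) {ε : ℝ}
    (h1 : 1 / √n < ε) (h2 : ε < 1) : ExistsHardGraph P n ε (1 / 65536 * n / ε ^ 2) := by
  rcases n.eq_zero_or_pos with rfl | hn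
  -- `1 / √0 = 0`, so the hypotheses allow `n = 0`.
  · exact ⟨∅, fun _ => 1, by simp, fun _ _ _ => by simp⟩
  have hε : 0 < ε := lt_of_le_of_lt (by positivity) h1
  have hnε : 1 < n * ε ^ 2 := by
    have hsqrt : 0 < √(n : ℝ) := Real.sqrt_pos.2 (by exact_mod_cast hn)
    rw [div_lt_iff₀ hsqrt] at h1
    have := pow_lt_pow_left₀ h1 zero_le_one two_ne_zero
    rwa [mul_pow, Real.sq_sqrt (Nat.cast_nonneg n), one_pow, mul_comm] at this
  rcases le_or_gt (ε ^ 2) (1 / 4096) with hsmall | hlarge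
  · exact existsHardGraph_of_small hP hε hnε hsmall
  · exact existsHardGraph_of_large hP hε h2 hnε hlarge

/-- There is a constant `c > 0` such that for every predicate
`P ∈ {Cut, unCut, Or, nAnd, 10̄, 01̄}`, every integer `n` and every `ε ∈ (1/√n, 1)`,
there is an `n`-vertex weighted digraph `G` (with strictly positive weights) such that
every `ε`-`P`-sparsifier of `G` has at least `c·n/ε²` edges. -/
theorem stmt12 :
    ∃ c : ℝ, 0 < c ∧
      ∀ P ∈ [pCut, pUnCut, pOr, pNAnd, pBar10, pBar01],
        ∀ (n : ℕ) (ε : ℝ), 1 / Real.sqrt n < ε → ε < 1 →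
          ∃ (E : Finset (Fin n × Fin n)) (w : Fin n × Fin n → ℝ),
            (∀ e ∈ E, 0 < w e) ∧
            ∀ (Eε : Finset (Fin n × Fin n)) (wε : Fin n × Fin n → ℝ),
              IsSparsifier P E w Eε wε ε → c * n / ε ^ 2 ≤ (Eε.card : ℝ) := by
  refine ⟨1 / 65536, by norm_num, fun P hP n ε h1 h2 => existsHardGraph ?_ n h1 h2⟩
  simp only [List.mem_cons, List.not_mem_nil, or_false] at hP
  rcases hP with rfl | rfl | rfl | rfl | rfl | rfl <;>
    norm_num [mixedDiff, boolInd, pCut, pUnCut, pOr, pNAnd, pBar10, pBar01]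
end

section
/- Fix an integer n ≥ 2 and ε ∈ (0,1). Let T be a finite set, let sk be a function mapping each simple undirected graph G on vertex set {1, …, n} (all edges of weight 1) to an element of T, and let est : T × 2^{{1,…,n}} → ℝ be a function satisfying (1−ε)·And_G(S) ≤ est(sk(G), S) ≤ (1+ε)·And_G(S) for every such graph G and every S ⊆ {1, …, n}, where And_G(S) denotes the number of edges of G with both endpoints in S. Then sk is injective; consequently |T| ≥ 2^{n(n−1)/2}, i.e., the sketch-size of any ε-And-sketching-scheme on n vertices is at least n(n−1)/2 = Ω(n²) bits. -/
/-- `And_G(S)`: the number of edges of the simple undirected graph `G` (a set of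
unordered pairs of distinct vertices, each of weight 1) with both endpoints in `S`. -/
def andCount {n : ℕ} (G : Finset (Sym2 (Fin n))) (S : Finset (Fin n)) : ℕ :=
  (G.filter fun e => ∀ x ∈ e, x ∈ S).card

/-- Fix `n ≥ 2` and `ε ∈ (0,1)`. Let `(sk, est)` be an
`ε`-`And`-sketching-scheme on `n` vertices: `sk` maps each simple undirected graph on
`{1, …, n}` to an element of a finite set `T`, and `est(sk(G), S)` is within factor
`(1 ± ε)` of `And_G(S)` for every such graph `G` and every `S`. Then `sk` is injective
on the set of simple graphs; consequently `|T| ≥ 2^{n(n−1)/2}`, i.e., the sketch-size is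
at least `n(n−1)/2 = Ω(n²)` bits. -/
theorem stmt19 (n : ℕ) (hn : 2 ≤ n) (ε : ℝ) (hε : ε ∈ Set.Ioo (0 : ℝ) 1)
    (T : Type) [Fintype T]
    (sk : Finset (Sym2 (Fin n)) → T)
    (est : T → Finset (Fin n) → ℝ)
    (h : ∀ G : Finset (Sym2 (Fin n)), (∀ e ∈ G, ¬e.IsDiag) →
      ∀ S : Finset (Fin n),
        (1 - ε) * (andCount G S : ℝ) ≤ est (sk G) S ∧
          est (sk G) S ≤ (1 + ε) * (andCount G S : ℝ)) :
    Set.InjOn sk {G : Finset (Sym2 (Fin n)) | ∀ e ∈ G, ¬e.IsDiag} ∧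
      2 ^ (n * (n - 1) / 2) ≤ Fintype.card T := by
  have hsub : ∀ G1 G2 : Finset (Sym2 (Fin n)), (∀ e ∈ G1, ¬e.IsDiag) →
      (∀ e ∈ G2, ¬e.IsDiag) → sk G1 = sk G2 → G1 ⊆ G2 := by
    intro G1 G2 h1 h2 heq e he
    induction e using Sym2.ind with
    | _ a b =>
      have hab : a ≠ b := by
        have := h1 _ he; simpa [Sym2.isDiag_iff_proj_eq] using this
      set S : Finset (Fin n) := {a, b} with hS
      have hc1 : 1 ≤ andCount G1 S := by
        apply Finset.card_pos.mpr
        refine ⟨s(a, b), Finset.mem_filter.mpr ⟨he, ?_⟩⟩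
        intro x hx
        rcases Sym2.mem_iff.mp hx with rfl | rfl <;> simp [hS]
      have hpos : 0 < est (sk G1) S := by
        have h1' := (h G1 h1 S).1
        have : (0 : ℝ) < (1 - ε) * (andCount G1 S : ℝ) := by
          apply mul_pos (by linarith [hε.2])
          exact_mod_cast Nat.lt_of_lt_of_le Nat.zero_lt_one hc1
        linarith
      have hc2 : andCount G2 S ≠ 0 := by
        intro h0
        have h2' := (h G2 h2 S).2
        rw [heq] at hpos
        rw [h0] at h2'
        simp at h2'
        linarith
      obtain ⟨f, hf⟩ := Finset.card_pos.mp (Nat.pos_of_ne_zero hc2)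
      obtain ⟨hfG, hfS⟩ := Finset.mem_filter.mp hf
      revert hfG hfS
      induction f using Sym2.ind with
      | _ x y =>
        intro hfG hfS
        have hxy : x ≠ y := by
          have := h2 _ hfG; simpa [Sym2.isDiag_iff_proj_eq] using this
        have hx : x = a ∨ x = b := by
          have := hfS x (by simp); simpa [hS] using this
        have hy : y = a ∨ y = b := by
          have := hfS y (by simp); simpa [hS] using this
        rcases hx with rfl | rfl <;> rcases hy with rfl | rfl
        · exact absurd rfl hxy
        · exact hfG
        · rw [Sym2.eq_swap] at hfG; exact hfG
        · exact absurd rfl hxy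
  have hinj : Set.InjOn sk {G : Finset (Sym2 (Fin n)) | ∀ e ∈ G, ¬e.IsDiag} := by
    intro G1 h1 G2 h2 heq
    exact Finset.Subset.antisymm (hsub G1 G2 h1 h2 heq) (hsub G2 G1 h2 h1 heq.symm)
  refine ⟨hinj, ?_⟩
  classical
  set D : Finset (Sym2 (Fin n)) := Finset.univ.filter (fun e => ¬e.IsDiag) with hD
  have hDcard : D.card = n * (n - 1) / 2 := by
    rw [hD, ← Fintype.card_subtype, Sym2.card_subtype_not_diag, Fintype.card_fin,
      Nat.choose_two_right]
  have hmemD : ∀ A ∈ D.powerset, ∀ e ∈ A, ¬e.IsDiag := by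
    intro A hA e heA
    have := Finset.mem_powerset.mp hA heA
    exact (Finset.mem_filter.mp this).2
  have hcard : (D.powerset.image sk).card = 2 ^ (n * (n - 1) / 2) := by
    rw [Finset.card_image_of_injOn, Finset.card_powerset, hDcard]
    intro A hA B hB hAB
    exact hinj (hmemD A hA) (hmemD B hB) hAB
  calc 2 ^ (n * (n - 1) / 2) = (D.powerset.image sk).card := hcard.symm
    _ ≤ Fintype.card T := Finset.card_le_univ _
end
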